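/- arXiv:2112.05044 — 5 statements merged into one kernel-verified Lean document; each statement's English description precedes it below -/
import Mathlib

section
/- For every t > 0 and every z ∈ ℝ one has min(t^{g⁻ − 1}, t^{g⁺ − 1}) · |g(z)| ≤ |g(tz)| ≤ max(t^{g⁻ − 1}, t^{g⁺ − 1}) · |g(z)|. -/
/-!
The condition `g⁻ - 1 ≤ s g'(s) / g(s) ≤ g⁺ - 1` says exactly that, on `(0, ∞)`, the
function `s ↦ g(s) s^{-(g⁻ - 1)}` is nondecreasing and `s ↦ g(s) s^{-(g⁺ - 1)}` is
nonincreasing. Comparing these functions at `z` and `t z` bounds `g(t z)` by `t^{g^± - 1} g(z)`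
for `z > 0`; the case of general `z` reduces to `|z|` because `|g(z)| = g(|z|)`.
-/

open Set

namespace Real

theorem hasDerivAt_mul_rpow_neg {f : ℝ → ℝ} {s : ℝ} (hf : DifferentiableAt ℝ f s)
    (hs : 0 < s) (c : ℝ) :
    HasDerivAt (fun x => f x * x ^ (-c)) ((deriv f s * s - c * f s) * s ^ (-c - 1)) s := by
  refine (hf.hasDerivAt.mul (hasDerivAt_rpow_const (p := -c) (Or.inl hs.ne'))).congr_deriv ?_
  rw [rpow_sub_one hs.ne']
  field_simp
  ring

variable {f : ℝ → ℝ} {c : ℝ}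

theorem monotoneOn_mul_rpow_neg (hf : ∀ s, 0 < s → DifferentiableAt ℝ f s)
    (h : ∀ s, 0 < s → c * f s ≤ deriv f s * s) :
    MonotoneOn (fun s => f s * s ^ (-c)) (Ioi 0) := by
  have hderiv (s : ℝ) (hs : 0 < s) := hasDerivAt_mul_rpow_neg (hf s hs) hs c
  refine monotoneOn_of_hasDerivWithinAt_nonneg (convex_Ioi 0)
    (fun s hs => (hderiv s hs).continuousAt.continuousWithinAt)
    (fun s hs => (hderiv s (interior_subset hs)).hasDerivWithinAt) (fun s hs => ?_)
  replace hs : 0 < s := interior_subset hs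
  exact mul_nonneg (sub_nonneg.2 (h s hs)) (rpow_pos_of_pos hs _).le

theorem antitoneOn_mul_rpow_neg (hf : ∀ s, 0 < s → DifferentiableAt ℝ f s)
    (h : ∀ s, 0 < s → deriv f s * s ≤ c * f s) :
    AntitoneOn (fun s => f s * s ^ (-c)) (Ioi 0) := by
  have hderiv (s : ℝ) (hs : 0 < s) := hasDerivAt_mul_rpow_neg (hf s hs) hs c
  refine antitoneOn_of_hasDerivWithinAt_nonpos (convex_Ioi 0)
    (fun s hs => (hderiv s hs).continuousAt.continuousWithinAt)
    (fun s hs => (hderiv s (interior_subset hs)).hasDerivWithinAt) (fun s hs => ?_)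
  replace hs : 0 < s := interior_subset hs
  exact mul_nonpos_of_nonpos_of_nonneg (sub_nonpos.2 (h s hs)) (rpow_pos_of_pos hs _).le

theorem rpow_mul_mul_rpow_neg {t z : ℝ} (ht : 0 < t) (hz : 0 ≤ z) (c : ℝ) :
    t ^ c * (t * z) ^ (-c) = z ^ (-c) := by
  rw [mul_rpow ht.le hz, ← mul_assoc, ← rpow_add ht, add_neg_cancel, rpow_zero, one_mul]

variable {t z : ℝ}

theorem rpow_mul_le_apply_mul_iff (ht : 0 < t) (hz : 0 < z) :
    t ^ c * f z ≤ f (t * z) ↔ f z * z ^ (-c) ≤ f (t * z) * (t * z) ^ (-c) := by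
  rw [← rpow_mul_mul_rpow_neg ht hz.le c, ← mul_assoc, mul_comm (f z),
    mul_le_mul_iff_of_pos_right (rpow_pos_of_pos (mul_pos ht hz) _)]

theorem apply_mul_le_rpow_mul_iff (ht : 0 < t) (hz : 0 < z) :
    f (t * z) ≤ t ^ c * f z ↔ f (t * z) * (t * z) ^ (-c) ≤ f z * z ^ (-c) := by
  rw [← rpow_mul_mul_rpow_neg ht hz.le c, ← mul_assoc, mul_comm (f z),
    mul_le_mul_iff_of_pos_right (rpow_pos_of_pos (mul_pos ht hz) _)]

end Real

open Real

theorem min_rpow_mul_le_apply_mul_le_max_rpow_mul {g : ℝ → ℝ} {c₁ c₂ t z : ℝ}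
    (hd : ∀ s, 0 < s → DifferentiableAt ℝ g s)
    (hlow : ∀ s, 0 < s → c₁ * g s ≤ deriv g s * s)
    (hup : ∀ s, 0 < s → deriv g s * s ≤ c₂ * g s)
    (ht : 0 < t) (hz : 0 < z) (hgz : 0 ≤ g z) :
    min (t ^ c₁) (t ^ c₂) * g z ≤ g (t * z) ∧ g (t * z) ≤ max (t ^ c₁) (t ^ c₂) * g z := by
  have hmono := monotoneOn_mul_rpow_neg hd hlow
  have hanti := antitoneOn_mul_rpow_neg hd hup
  have htz : t * z ∈ Ioi 0 := mul_pos ht hz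
  rcases le_total 1 t with h1 | h1
  · have hle : z ≤ t * z := le_mul_of_one_le_left hz.le h1
    exact ⟨(mul_le_mul_of_nonneg_right (min_le_left _ _) hgz).trans
        ((rpow_mul_le_apply_mul_iff ht hz).2 (hmono hz htz hle)),
      ((apply_mul_le_rpow_mul_iff ht hz).2 (hanti hz htz hle)).trans
        (mul_le_mul_of_nonneg_right (le_max_right _ _) hgz)⟩
  · have hle : t * z ≤ z := mul_le_of_le_one_left hz.le h1
    exact ⟨(mul_le_mul_of_nonneg_right (min_le_right _ _) hgz).trans
        ((rpow_mul_le_apply_mul_iff ht hz).2 (hanti htz hz hle)),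
      ((apply_mul_le_rpow_mul_iff ht hz).2 (hmono htz hz hle)).trans
        (mul_le_mul_of_nonneg_right (le_max_left _ _) hgz)⟩

section RadialProfile

variable {a g : ℝ → ℝ}

theorem abs_apply_eq_apply_abs_of_radial (hg_def : ∀ t : ℝ, g t = a |t| * t)
    (ha_pos : ∀ t : ℝ, 0 < t → 0 < a t) (z : ℝ) :
    |g z| = g |z| := by
  rw [hg_def, hg_def, abs_mul, abs_abs]
  rcases (abs_nonneg z).eq_or_lt with hz | hz
  · rw [← hz, mul_zero, mul_zero]
  · rw [abs_of_pos (ha_pos _ hz)]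

theorem differentiableAt_of_radial (hg_def : ∀ t : ℝ, g t = a |t| * t)
    (ha_diff : ∀ t : ℝ, 0 < t → DifferentiableAt ℝ a t) {s : ℝ}
    (hs : 0 < s) : DifferentiableAt ℝ g s := by
  refine ((ha_diff s hs).mul differentiableAt_id).congr_of_eventuallyEq ?_
  filter_upwards [Ioi_mem_nhds hs] with t ht
  rw [hg_def, abs_of_pos ht]
  rfl

theorem apply_pos_of_radial (hg_def : ∀ t : ℝ, g t = a |t| * t)
    (ha_pos : ∀ t : ℝ, 0 < t → 0 < a t) {s : ℝ} (hs : 0 < s) : 0 < g s := by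
  rw [hg_def, abs_of_pos hs]
  exact mul_pos (ha_pos s hs) hs

end RadialProfile

theorem stmt_5_general (a g : ℝ → ℝ) (gm gp : ℝ)
    (hg_def : ∀ t : ℝ, g t = a |t| * t)
    (ha_diff : ∀ t : ℝ, 0 < t → DifferentiableAt ℝ a t)
    (ha_pos : ∀ t : ℝ, 0 < t → 0 < a t)
    (hbound : ∀ t : ℝ, 0 < t →
      gm - 1 ≤ deriv g t * t / g t ∧ deriv g t * t / g t ≤ gp - 1) :
    ∀ t : ℝ, 0 < t → ∀ z : ℝ,
      min (t ^ (gm - 1)) (t ^ (gp - 1)) * |g z| ≤ |g (t * z)| ∧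
      |g (t * z)| ≤ max (t ^ (gm - 1)) (t ^ (gp - 1)) * |g z| := by
  have hg_pos : ∀ s, 0 < s → 0 < g s := fun s => apply_pos_of_radial hg_def ha_pos
  intro t ht z
  have habs := abs_apply_eq_apply_abs_of_radial hg_def ha_pos
  rw [habs, habs, abs_mul, abs_of_pos ht]
  rcases (abs_nonneg z).eq_or_lt with hz | hz
  · simp [← hz, hg_def]
  exact min_rpow_mul_le_apply_mul_le_max_rpow_mul
    (fun s hs => differentiableAt_of_radial hg_def ha_diff hs)
    (fun s hs => (le_div_iff₀ (hg_pos s hs)).1 (hbound s hs).1)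
    (fun s hs => (div_le_iff₀ (hg_pos s hs)).1 (hbound s hs).2) ht hz (hg_pos _ hz).le

/-- For every `t > 0` and `z ∈ ℝ`,
`min (t^{g⁻-1}) (t^{g⁺-1}) * |g z| ≤ |g (t*z)| ≤ max (t^{g⁻-1}) (t^{g⁺-1}) * |g z|`. -/
theorem stmt_5 (a g : ℝ → ℝ) (gm gp : ℝ)
    (hg_def : ∀ t : ℝ, g t = a |t| * t)
    (ha_diff : ∀ t : ℝ, 0 < t → DifferentiableAt ℝ a t)
    (ha_pos : ∀ t : ℝ, 0 < t → 0 < a t)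
    (hg_odd : ∀ t : ℝ, g (-t) = - g t)
    (hg_mono : StrictMono g) (hg_surj : Function.Surjective g) (hg_cont : Continuous g)
    (hgm : 1 < gm) (hgmgp : gm ≤ gp)
    (hbound : ∀ t : ℝ, 0 < t →
      gm - 1 ≤ deriv g t * t / g t ∧ deriv g t * t / g t ≤ gp - 1) :
    ∀ t : ℝ, 0 < t → ∀ z : ℝ,
      min (t ^ (gm - 1)) (t ^ (gp - 1)) * |g z| ≤ |g (t * z)| ∧
      |g (t * z)| ≤ max (t ^ (gm - 1)) (t ^ (gp - 1)) * |g z| :=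
  stmt_5_general a g gm gp hg_def ha_diff ha_pos hbound
end

section
/- If a(t) is decreasing for t > 0, then there exists a constant d₂ > 0, depending only on g⁻ and g⁺, such that for all η, ξ ∈ ℝ^N one has |a(|η|)η − a(|ξ|)ξ| ≤ d₂ · g(|η − ξ|), where a(|ζ|)ζ is interpreted as 0 when ζ = 0. -/
open MeasureTheory

/-- If `a` is decreasing on `(0,∞)`, there is `d₂ > 0` such that
`|a(|η|)η − a(|ξ|)ξ| ≤ d₂ g(|η − ξ|)` for all `η, ξ`. -/
theorem stmt_10 (N : ℕ) (hN : 1 ≤ N)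
    (a g G : ℝ → ℝ) (gm gp : ℝ)
    (hg_def : ∀ t : ℝ, g t = a |t| * t)
    (hg_odd : ∀ t : ℝ, g (-t) = - g t)
    (hg_mono : StrictMono g) (hg_surj : Function.Surjective g) (hg_cont : Continuous g)
    (hG : ∀ t : ℝ, G t = ∫ s in (0:ℝ)..t, g s)
    (hgm : 1 < gm) (hgmgp : gm ≤ gp)
    (hbound : ∀ t : ℝ, 0 < t → gm ≤ g t * t / G t ∧ g t * t / G t ≤ gp)
    (ha_anti : ∀ s t : ℝ, 0 < s → s ≤ t → a t ≤ a s)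
    (A : EuclideanSpace ℝ (Fin N) → EuclideanSpace ℝ (Fin N))
    (hA0 : A 0 = 0)
    (hA : ∀ ζ : EuclideanSpace ℝ (Fin N), ζ ≠ 0 → A ζ = a ‖ζ‖ • ζ) :
    ∃ d₂ : ℝ, 0 < d₂ ∧ ∀ η ξ : EuclideanSpace ℝ (Fin N),
      ‖A η - A ξ‖ ≤ d₂ * g ‖η - ξ‖ := by
  have g0 : g 0 = 0 := by simpa using hg_def 0
  have gpos : ∀ t : ℝ, 0 < t → 0 < g t := fun t ht => g0 ▸ hg_mono ht
  have gdef' : ∀ t : ℝ, 0 ≤ t → g t = a t * t := fun t ht => by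
    rw [hg_def t, abs_of_nonneg ht]
  have apos : ∀ t : ℝ, 0 < t → 0 < a t := by
    intro t ht
    have h1 := gpos t ht
    rw [gdef' t ht.le] at h1
    nlinarith
  have key : ∀ η ξ : EuclideanSpace ℝ (Fin N), ξ ≠ 0 → ‖ξ‖ ≤ ‖η‖ →
      ‖A η - A ξ‖ ≤ 4 * g ‖η - ξ‖ := by
    intro η ξ hξ hle
    have hξn : 0 < ‖ξ‖ := norm_pos_iff.mpr hξ
    have hηn : 0 < ‖η‖ := lt_of_lt_of_le hξn hle
    have hη : η ≠ 0 := norm_pos_iff.mp hηn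
    set r := ‖η - ξ‖ with hr
    rcases eq_or_lt_of_le (norm_nonneg (η - ξ)) with h0 | hrpos
    · have heq : η = ξ := sub_eq_zero.mp (norm_eq_zero.mp h0.symm)
      simp [heq, g0, hr]
    · have haη : 0 < a ‖η‖ := apos _ hηn
      have hr2 : r / 2 ≤ ‖η‖ := by
        have h1 : r ≤ ‖η‖ + ‖ξ‖ := norm_sub_le η ξ
        linarith
      have ha2 : a ‖η‖ ≤ a (r / 2) := ha_anti (r / 2) ‖η‖ (by linarith) hr2
      have hgr2 : a (r / 2) * r = 2 * g (r / 2) := by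
        rw [gdef' (r / 2) (by linarith)]; ring
      have hgmono2 : g (r / 2) ≤ g r := hg_mono.le_iff_le.mpr (by linarith)
      have hbound1 : a ‖η‖ * r ≤ 2 * g r := by nlinarith
      have haξη : a ‖η‖ ≤ a ‖ξ‖ := ha_anti _ _ hξn hle
      have hgξη : g ‖ξ‖ ≤ g ‖η‖ := hg_mono.le_iff_le.mpr hle
      have hnn : ‖η‖ - ‖ξ‖ ≤ r := norm_sub_norm_le η ξ
      have hbound2 : (a ‖ξ‖ - a ‖η‖) * ‖ξ‖ ≤ 2 * g r := by
        have e1 : g ‖ξ‖ = a ‖ξ‖ * ‖ξ‖ := gdef' _ hξn.le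
        have e2 : g ‖η‖ = a ‖η‖ * ‖η‖ := gdef' _ hηn.le
        have e3 : a ‖η‖ * (‖η‖ - ‖ξ‖) ≤ a ‖η‖ * r :=
          mul_le_mul_of_nonneg_left hnn haη.le
        nlinarith
      have hdecomp : A η - A ξ = a ‖η‖ • (η - ξ) + (a ‖η‖ - a ‖ξ‖) • ξ := by
        rw [hA η hη, hA ξ hξ, smul_sub, sub_smul]
        abel
      calc ‖A η - A ξ‖ ≤ ‖a ‖η‖ • (η - ξ)‖ + ‖(a ‖η‖ - a ‖ξ‖) • ξ‖ := by
            rw [hdecomp]; exact norm_add_le _ _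
        _ = a ‖η‖ * r + |a ‖η‖ - a ‖ξ‖| * ‖ξ‖ := by
            rw [norm_smul, norm_smul, Real.norm_eq_abs, Real.norm_eq_abs,
              abs_of_pos haη]
        _ = a ‖η‖ * r + (a ‖ξ‖ - a ‖η‖) * ‖ξ‖ := by
            rw [abs_of_nonpos (by linarith)]; ring_nf
        _ ≤ 2 * g r + 2 * g r := add_le_add hbound1 hbound2
        _ = 4 * g r := by ring
  refine ⟨4, by norm_num, ?_⟩
  intro η ξ
  by_cases hξ : ξ = 0
  · subst hξ
    by_cases hη : η = 0
    · subst hη; simp [hA0, g0]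
    · rw [hA0, sub_zero, sub_zero, hA η hη, norm_smul, Real.norm_eq_abs,
        abs_of_pos (apos _ (norm_pos_iff.mpr hη)), ← gdef' _ (norm_nonneg η)]
      nlinarith [gpos ‖η‖ (norm_pos_iff.mpr hη)]
  · by_cases hη : η = 0
    · subst hη
      rw [hA0, zero_sub, norm_neg, zero_sub, norm_neg, hA ξ hξ, norm_smul,
        Real.norm_eq_abs, abs_of_pos (apos _ (norm_pos_iff.mpr hξ)),
        ← gdef' _ (norm_nonneg ξ)]
      nlinarith [gpos ‖ξ‖ (norm_pos_iff.mpr hξ)]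
    · rcases le_total ‖ξ‖ ‖η‖ with h | h
      · exact key η ξ hξ h
      · rw [show A η - A ξ = -(A ξ - A η) by abel, norm_neg,
          show η - ξ = -(ξ - η) by abel, norm_neg]
        exact key ξ η hη h
end

section
/- For every η, ξ ∈ ℝ^N one has ⟨a(|η|)η − a(|ξ|)ξ, η − ξ⟩ ≥ 0, where ⟨·,·⟩ is the Euclidean inner product on ℝ^N and a(|ζ|)ζ is interpreted as 0 when ζ = 0. -/
/-! Cauchy–Schwarz bounds the cross terms `⟪a(|x|)x, y⟫` by `a(|x|)|x|·|y|` (the coefficient is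
nonnegative because `t ↦ a(t)t` is monotone and vanishes at `0`), which reduces the inner product to
`(a(|x|)|x| - a(|y|)|y|)(|x| - |y|) ≥ 0`. -/

open Set

section Radial

variable {E : Type*} [NormedAddCommGroup E] [InnerProductSpace ℝ E] {a : ℝ → ℝ}

lemma real_inner_smul_norm_le (ha : MonotoneOn (fun t => a t * t) (Ici 0)) (x y : E) :
    inner ℝ (a ‖x‖ • x) y ≤ a ‖x‖ * ‖x‖ * ‖y‖ := by
  rcases eq_or_ne x 0 with rfl | hx
  · simp
  have hx_pos : 0 < ‖x‖ := norm_pos_iff.mpr hx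
  have ha_nonneg : 0 ≤ a ‖x‖ := by
    have := ha (mem_Ici.mpr le_rfl) (mem_Ici.mpr hx_pos.le) hx_pos.le
    exact nonneg_of_mul_nonneg_left (by simpa using this) hx_pos
  calc inner ℝ (a ‖x‖ • x) y = a ‖x‖ * inner ℝ x y := real_inner_smul_left x y _
    _ ≤ a ‖x‖ * (‖x‖ * ‖y‖) := mul_le_mul_of_nonneg_left (real_inner_le_norm x y) ha_nonneg
    _ = a ‖x‖ * ‖x‖ * ‖y‖ := by ring

lemma real_inner_smul_norm_self (x : E) : inner ℝ (a ‖x‖ • x) x = a ‖x‖ * ‖x‖ * ‖x‖ := by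
  rw [real_inner_smul_left, real_inner_self_eq_norm_mul_norm, mul_assoc]

theorem inner_radial_sub_nonneg (ha : MonotoneOn (fun t => a t * t) (Ici 0)) (x y : E) :
    0 ≤ inner ℝ (a ‖x‖ • x - a ‖y‖ • y) (x - y) := by
  have hxy := real_inner_smul_norm_le ha x y
  have hyx := real_inner_smul_norm_le ha y x
  have hmono : 0 ≤ (a ‖x‖ * ‖x‖ - a ‖y‖ * ‖y‖) * (‖x‖ - ‖y‖) := by
    rcases le_total ‖y‖ ‖x‖ with h | h
    · have := ha (mem_Ici.mpr (norm_nonneg y)) (mem_Ici.mpr (norm_nonneg x)) h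
      exact mul_nonneg (sub_nonneg.mpr this) (sub_nonneg.mpr h)
    · have := ha (mem_Ici.mpr (norm_nonneg x)) (mem_Ici.mpr (norm_nonneg y)) h
      exact mul_nonneg_of_nonpos_of_nonpos (sub_nonpos.mpr this) (sub_nonpos.mpr h)
  rw [inner_sub_left, inner_sub_right, inner_sub_right, real_inner_smul_norm_self,
    real_inner_smul_norm_self]
  nlinarith

end Radial

theorem stmt_11_general (N : ℕ)
    (a g : ℝ → ℝ)
    (hg_def : ∀ t : ℝ, g t = a |t| * t)
    (hg_mono : StrictMono g)
    (A : EuclideanSpace ℝ (Fin N) → EuclideanSpace ℝ (Fin N))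
    (hA0 : A 0 = 0)
    (hA : ∀ ζ : EuclideanSpace ℝ (Fin N), ζ ≠ 0 → A ζ = a ‖ζ‖ • ζ) :
    ∀ η ξ : EuclideanSpace ℝ (Fin N),
      (0 : ℝ) ≤ inner ℝ (A η - A ξ) (η - ξ) := by
  have hA_eq : A = fun ζ => a ‖ζ‖ • ζ := by
    funext ζ
    rcases eq_or_ne ζ 0 with rfl | hζ
    · simp [hA0]
    · exact hA ζ hζ
  have ha : MonotoneOn (fun t => a t * t) (Ici 0) := fun s hs t ht hst => by
    simpa only [hg_def, abs_of_nonneg (mem_Ici.mp hs), abs_of_nonneg (mem_Ici.mp ht)]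
      using hg_mono.monotone hst
  intro η ξ
  rw [hA_eq]
  exact inner_radial_sub_nonneg ha η ξ

/-- Monotonicity of `η ↦ a(|η|)η`:
`⟨a(|η|)η − a(|ξ|)ξ, η − ξ⟩ ≥ 0` for all `η, ξ ∈ ℝ^N`. -/
theorem stmt_11 (N : ℕ) (hN : 1 ≤ N)
    (a g G : ℝ → ℝ)
    (hg_def : ∀ t : ℝ, g t = a |t| * t)
    (hg_odd : ∀ t : ℝ, g (-t) = - g t)
    (hg_mono : StrictMono g) (hg_surj : Function.Surjective g) (hg_cont : Continuous g)
    (hG : ∀ t : ℝ, G t = ∫ s in (0:ℝ)..t, g s)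
    (A : EuclideanSpace ℝ (Fin N) → EuclideanSpace ℝ (Fin N))
    (hA0 : A 0 = 0)
    (hA : ∀ ζ : EuclideanSpace ℝ (Fin N), ζ ≠ 0 → A ζ = a ‖ζ‖ • ζ) :
    ∀ η ξ : EuclideanSpace ℝ (Fin N),
      (0 : ℝ) ≤ inner ℝ (A η - A ξ) (η - ξ) :=
  stmt_11_general N a g hg_def hg_mono A hA0 hA
end

section
/- For every η, ξ ∈ ℝ^N one has (1/2)·⟨a(|η|)η − a(|ξ|)ξ, η − ξ⟩ ≥ G(|η|) + G(|ξ|) − 2·G(|(η + ξ)/2|), where ⟨·,·⟩ is the Euclidean inner product on ℝ^N and a(|ζ|)ζ is interpreted as 0 when ζ = 0. -/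
/-!
Since `g ≥ 0` on `[0, ∞)` and `G' = g` is monotone, Cauchy–Schwarz shows that `A x` is a
subgradient of the convex function `x ↦ G ‖x‖` at `x`. Writing the subgradient inequalities
at `η` and at `ξ`, both tested against the midpoint `(η + ξ) / 2`, and adding them gives the
estimate.
-/

open scoped RealInnerProductSpace

theorem Monotone.mul_sub_le_integral_sub {g : ℝ → ℝ} (hg : Monotone g) (s t : ℝ) :
    g t * (s - t) ≤ (∫ u in (0 : ℝ)..s, g u) - ∫ u in (0 : ℝ)..t, g u := by
  rw [intervalIntegral.integral_interval_sub_left hg.intervalIntegrable hg.intervalIntegrable]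
  rcases le_total t s with hts | hst
  · have hconst : ∫ _ in t..s, g t ≤ ∫ u in t..s, g u :=
      intervalIntegral.integral_mono_on hts intervalIntegrable_const hg.intervalIntegrable
        fun u hu => hg hu.1
    simpa [mul_comm] using hconst
  · have hconst : ∫ u in s..t, g u ≤ ∫ _ in s..t, g t :=
      intervalIntegral.integral_mono_on hst hg.intervalIntegrable intervalIntegrable_const
        fun u hu => hg hu.2
    rw [intervalIntegral.integral_symm s t]
    simp only [intervalIntegral.integral_const, smul_eq_mul] at hconst
    nlinarith

section

variable {E : Type*} [NormedAddCommGroup E] [InnerProductSpace ℝ E]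

theorem real_inner_smul_sub_le_of_tangent {φ : ℝ → ℝ} {c : ℝ} (hc : 0 ≤ c) (x y : E)
    (hφ : c * ‖x‖ * (‖y‖ - ‖x‖) ≤ φ ‖y‖ - φ ‖x‖) :
    ⟪c • x, y - x⟫ ≤ φ ‖y‖ - φ ‖x‖ := by
  have hcs : c * ⟪x, y⟫ ≤ c * (‖x‖ * ‖y‖) := mul_le_mul_of_nonneg_left (real_inner_le_norm x y) hc
  calc ⟪c • x, y - x⟫ = c * (⟪x, y⟫ - ‖x‖ ^ 2) := by
        rw [real_inner_smul_left, inner_sub_right, real_inner_self_eq_norm_sq]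
    _ ≤ c * ‖x‖ * (‖y‖ - ‖x‖) := by linarith
    _ ≤ φ ‖y‖ - φ ‖x‖ := hφ

theorem sub_two_mul_midpoint_le_inner_of_subgradient {F : E → ℝ} {A : E → E}
    (hA : ∀ x y, ⟪A x, y - x⟫ ≤ F y - F x) (η ξ : E) :
    F η + F ξ - 2 * F ((1 / 2 : ℝ) • (η + ξ)) ≤ (1 / 2 : ℝ) * ⟪A η - A ξ, η - ξ⟫ := by
  set m : E := (1 / 2 : ℝ) • (η + ξ)
  have hη := hA η m
  have hξ := hA ξ m
  rw [show m - η = (-(1 / 2) : ℝ) • (η - ξ) by module, real_inner_smul_right] at hη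
  rw [show m - ξ = (1 / 2 : ℝ) • (η - ξ) by module, real_inner_smul_right] at hξ
  rw [inner_sub_left]
  linarith

end

theorem stmt_12_general (N : ℕ)
    (a g G : ℝ → ℝ)
    (hg_def : ∀ t : ℝ, g t = a |t| * t)
    (hg_mono : StrictMono g)
    (hG : ∀ t : ℝ, G t = ∫ s in (0:ℝ)..t, g s)
    (A : EuclideanSpace ℝ (Fin N) → EuclideanSpace ℝ (Fin N))
    (hA0 : A 0 = 0)
    (hA : ∀ ζ : EuclideanSpace ℝ (Fin N), ζ ≠ 0 → A ζ = a ‖ζ‖ • ζ) :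
    ∀ η ξ : EuclideanSpace ℝ (Fin N),
      G ‖η‖ + G ‖ξ‖ - 2 * G ‖(1 / 2 : ℝ) • (η + ξ)‖ ≤
        (1 / 2 : ℝ) * (inner ℝ (A η - A ξ) (η - ξ) : ℝ) := by
  have hg0 : g 0 = 0 := by simp [hg_def]
  have hG_tangent (s t : ℝ) : g t * (s - t) ≤ G s - G t := by
    rw [hG, hG]
    exact hg_mono.monotone.mul_sub_le_integral_sub s t
  refine sub_two_mul_midpoint_le_inner_of_subgradient (F := fun x => G ‖x‖) fun x y => ?_
  obtain rfl | hx := eq_or_ne x 0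
  · simpa [hA0, hg0] using hG_tangent ‖y‖ 0
  have hx_pos : 0 < ‖x‖ := norm_pos_iff.mpr hx
  have hgx : g ‖x‖ = a ‖x‖ * ‖x‖ := by rw [hg_def, abs_of_pos hx_pos]
  have ha_nonneg : 0 ≤ a ‖x‖ := by
    have := hg_mono hx_pos
    rw [hg0, hgx] at this
    exact (pos_of_mul_pos_left this hx_pos.le).le
  rw [hA x hx]
  exact real_inner_smul_sub_le_of_tangent ha_nonneg x y (hgx ▸ hG_tangent ‖y‖ ‖x‖)

/-- For all `η, ξ ∈ ℝ^N`,
`(1/2)⟨a(|η|)η − a(|ξ|)ξ, η − ξ⟩ ≥ G(|η|) + G(|ξ|) − 2 G(|(η+ξ)/2|)`. -/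
theorem stmt_12 (N : ℕ) (hN : 1 ≤ N)
    (a g G : ℝ → ℝ)
    (hg_def : ∀ t : ℝ, g t = a |t| * t)
    (hg_odd : ∀ t : ℝ, g (-t) = - g t)
    (hg_mono : StrictMono g) (hg_surj : Function.Surjective g) (hg_cont : Continuous g)
    (hG : ∀ t : ℝ, G t = ∫ s in (0:ℝ)..t, g s)
    (A : EuclideanSpace ℝ (Fin N) → EuclideanSpace ℝ (Fin N))
    (hA0 : A 0 = 0)
    (hA : ∀ ζ : EuclideanSpace ℝ (Fin N), ζ ≠ 0 → A ζ = a ‖ζ‖ • ζ) :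
    ∀ η ξ : EuclideanSpace ℝ (Fin N),
      G ‖η‖ + G ‖ξ‖ - 2 * G ‖(1 / 2 : ℝ) • (η + ξ)‖ ≤
        (1 / 2 : ℝ) * (inner ℝ (A η - A ξ) (η - ξ) : ℝ) :=
  stmt_12_general N a g G hg_def hg_mono hG A hA0 hA
end

section
/- Define A : ℝ^N → ℝ^N by A(η) = a(|η|)η for η ≠ 0 and A(0) = 0. Then for every η ∈ ℝ^N with η ≠ 0, A is differentiable at η and its derivative DA(η) satisfies ‖DA(η)‖ · |η| ≤ (g⁺ − 1) · g(|η|), where ‖DA(η)‖ denotes the operator norm of DA(η). -/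
/-!
Away from the origin `A(η) = a(|η|) η` is differentiable with
`DA(η) = a(t) I + (a'(t) / t) η ⊗ η`, `t = |η|`. As `a` is increasing, `a'(t) ≥ 0`, so the
triangle inequality gives `‖DA(η)‖ ≤ a(t) + a'(t) t = g'(t)`, and `g'(t) t ≤ (g⁺ − 1) g(t)`
is the definition of `g⁺`.
-/

open InnerProductSpace (rankOne)

section RadialMap

variable {E : Type*} [NormedAddCommGroup E] [InnerProductSpace ℝ E] {x : E}

theorem hasFDerivAt_norm_of_ne_zero (hx : x ≠ 0) :
    HasFDerivAt (‖·‖) (‖x‖⁻¹ • innerSL ℝ x) x := by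
  have h := (hasStrictFDerivAt_norm_sq x).hasFDerivAt.sqrt (by positivity)
  simp only [Real.sqrt_sq (norm_nonneg _)] at h
  convert h using 1
  ext v
  simp only [FunLike.coe_smul, Pi.smul_apply, smul_eq_mul, two_smul,
    FunLike.coe_add, Pi.add_apply]
  ring

theorem HasDerivAt.hasFDerivAt_smul_norm {φ : ℝ → ℝ} {φ' : ℝ} (hφ : HasDerivAt φ φ' ‖x‖)
    (hx : x ≠ 0) :
    HasFDerivAt (fun y : E => φ ‖y‖ • y)
      (φ ‖x‖ • ContinuousLinearMap.id ℝ E + (φ' / ‖x‖) • rankOne ℝ x x) x := by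
  refine ((hφ.comp_hasFDerivAt x (hasFDerivAt_norm_of_ne_zero hx)).smul
    (hasFDerivAt_id x)).congr_fderiv ?_
  ext v
  simp [div_eq_mul_inv, mul_smul]

theorem norm_smul_id_add_smul_rankOne_le (c d : ℝ) (x : E) :
    ‖c • ContinuousLinearMap.id ℝ E + d • rankOne ℝ x x‖ ≤ |c| + |d| * ‖x‖ ^ 2 := by
  calc _ ≤ ‖c • ContinuousLinearMap.id ℝ E‖ + ‖d • rankOne ℝ x x‖ := norm_add_le _ _
    _ ≤ |c| * 1 + |d| * ‖x‖ ^ 2 := by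
        rw [norm_smul, norm_smul, InnerProductSpace.norm_rankOne, ← sq, Real.norm_eq_abs,
          Real.norm_eq_abs]
        gcongr
        exact ContinuousLinearMap.norm_id_le
    _ = |c| + |d| * ‖x‖ ^ 2 := by ring

end RadialMap

theorem HasDerivAt.mul_abs_self {a : ℝ → ℝ} {a' t : ℝ} (ha : HasDerivAt a a' t) (ht : 0 < t) :
    HasDerivAt (fun s => a |s| * s) (a' * t + a t) t := by
  have h := ha.mul (hasDerivAt_id t)
  simp only [id, mul_one] at h
  refine h.congr_of_eventuallyEq ?_
  filter_upwards [Ioi_mem_nhds ht] with s hs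
  rw [abs_of_pos hs]
  rfl

theorem stmt_17_general (N : ℕ) (a g : ℝ → ℝ) (gp : ℝ)
    (ha_diff : ∀ t : ℝ, 0 < t → DifferentiableAt ℝ a t)
    (ha_pos : ∀ t : ℝ, 0 < t → 0 < a t)
    (ha_mono : ∀ s t : ℝ, 0 < s → s ≤ t → a s ≤ a t)
    (hg_def : ∀ t : ℝ, g t = a |t| * t)
    (hbound : ∀ t : ℝ, 0 < t → deriv g t * t / g t ≤ gp - 1)
    (A : EuclideanSpace ℝ (Fin N) → EuclideanSpace ℝ (Fin N))
    (hA : ∀ ζ : EuclideanSpace ℝ (Fin N), ζ ≠ 0 → A ζ = a ‖ζ‖ • ζ) :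
    ∀ η : EuclideanSpace ℝ (Fin N), η ≠ 0 →
      ∃ D : EuclideanSpace ℝ (Fin N) →L[ℝ] EuclideanSpace ℝ (Fin N),
        HasFDerivAt A D η ∧ ‖D‖ * ‖η‖ ≤ (gp - 1) * g ‖η‖ := by
  intro η hη
  set t := ‖η‖
  have ht : 0 < t := norm_pos_iff.mpr hη
  have ha' : HasDerivAt a (deriv a t) t := (ha_diff t ht).hasDerivAt
  have ha'_nonneg : 0 ≤ deriv a t := by
    have hmono : MonotoneOn a (Set.Ioi 0) := fun s hs u _ hsu => ha_mono s u hs hsu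
    simpa [derivWithin_of_mem_nhds (Ioi_mem_nhds ht)] using hmono.derivWithin_nonneg (x := t)
  have hg' : deriv g t = deriv a t * t + a t := by
    rw [funext hg_def]
    exact (ha'.mul_abs_self ht).deriv
  have hgt : 0 < g t := by
    rw [hg_def, abs_of_pos ht]
    exact mul_pos (ha_pos t ht) ht
  refine ⟨_, (ha'.hasFDerivAt_smul_norm hη).congr_of_eventuallyEq ?_, ?_⟩
  · filter_upwards [isOpen_compl_singleton.mem_nhds hη] with ζ hζ using hA ζ hζ
  calc _ ≤ (|a t| + |deriv a t / t| * t ^ 2) * t := by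
        gcongr
        exact norm_smul_id_add_smul_rankOne_le _ _ η
    _ = deriv g t * t := by
        rw [abs_of_pos (ha_pos t ht), abs_div, abs_of_nonneg ha'_nonneg, abs_of_pos ht, hg']
        field_simp
        ring
    _ ≤ (gp - 1) * g t := (div_le_iff₀ hgt).mp (hbound t ht)

/-- For `A(η) = a(|η|)η` (with `A(0) = 0`), at every `η ≠ 0` the map `A` is
differentiable and `‖DA(η)‖ |η| ≤ (g⁺ − 1) g(|η|)`, where `g⁺ − 1 = sup g'(t)t/g(t)`. -/
theorem stmt_17 (N : ℕ) (hN : 1 ≤ N) (a g : ℝ → ℝ) (gp : ℝ)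
    (ha_diff : ∀ t : ℝ, 0 < t → DifferentiableAt ℝ a t)
    (ha_cont_deriv : ContinuousOn (deriv a) (Set.Ioi (0 : ℝ)))
    (ha_pos : ∀ t : ℝ, 0 < t → 0 < a t)
    (ha_mono : ∀ s t : ℝ, 0 < s → s ≤ t → a s ≤ a t)
    (hg_def : ∀ t : ℝ, g t = a |t| * t)
    (hg_odd : ∀ t : ℝ, g (-t) = - g t)
    (hg_mono : StrictMono g) (hg_surj : Function.Surjective g) (hg_cont : Continuous g)
    (hbound : ∀ t : ℝ, 0 < t → deriv g t * t / g t ≤ gp - 1)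
    (A : EuclideanSpace ℝ (Fin N) → EuclideanSpace ℝ (Fin N))
    (hA0 : A 0 = 0)
    (hA : ∀ ζ : EuclideanSpace ℝ (Fin N), ζ ≠ 0 → A ζ = a ‖ζ‖ • ζ) :
    ∀ η : EuclideanSpace ℝ (Fin N), η ≠ 0 →
      ∃ D : EuclideanSpace ℝ (Fin N) →L[ℝ] EuclideanSpace ℝ (Fin N),
        HasFDerivAt A D η ∧ ‖D‖ * ‖η‖ ≤ (gp - 1) * g ‖η‖ :=
  stmt_17_general N a g gp ha_diff ha_pos ha_mono hg_def hbound A hA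
end
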